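/- If every proper subset S of the state set Q of an n-state synchronizing strongly connected automaton A is kn-Extendable, then A has a synchronizing word of length at most (n-2)·kn + 1. -/

import Mathlib

/-!
Since a synchronizing word exists, some letter `a` merges two states `q₁ ≠ q₂` (if every letter
acted injectively, so would every word), so `{q : q·a = p₀}` has at least two elements for
`p₀ = q₁·a`. Each application of extendability enlarges the set of states sent into it by a
word of length at most `kn`, so after `n - 2` steps a word `w` sends all of `Q` into it,
and `w a` is synchronizing.
-/

/-- Action of a word on a state of a DFA. -/
def act {Q A : Type*} (δ : Q → A → Q) (q : Q) (w : List A) : Q := w.foldl δ q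

/-- Preimage `S·w⁻¹ = {q : q·w ∈ S}` of a subset under a word. -/
def preim {Q A : Type*} [Fintype Q] [DecidableEq Q] (δ : Q → A → Q)
    (S : Finset Q) (w : List A) : Finset Q :=
  Finset.univ.filter fun q => act δ q w ∈ S

section Automaton

variable {Q A : Type*} (δ : Q → A → Q)

@[simp]
lemma act_singleton (q : Q) (a : A) : act δ q [a] = δ q a := rfl

lemma act_append (q : Q) (u v : List A) : act δ q (u ++ v) = act δ (act δ q u) v :=
  List.foldl_append

lemma act_injective (hinj : ∀ a : A, Function.Injective (δ · a)) (w : List A) :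
    Function.Injective (act δ · w) := by
  induction w with
  | nil => exact fun _ _ h => h
  | cons a w ih => exact fun _ _ h => hinj a (ih h)

lemma exists_letter_merging_of_sync [Fintype Q] (hQ : 1 < Fintype.card Q)
    (hsync : ∃ (w : List A) (p : Q), ∀ q : Q, act δ q w = p) :
    ∃ (a : A) (q₁ q₂ : Q), q₁ ≠ q₂ ∧ δ q₁ a = δ q₂ a := by
  obtain ⟨w, p, hp⟩ := hsync
  by_contra! h
  obtain ⟨x, y, hxy⟩ := Fintype.exists_pair_of_one_lt_card hQ
  have hinj : ∀ a : A, Function.Injective (δ · a) := fun a x y hxy' =>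
    by_contra fun hne => h a x y hne hxy'
  exact hxy (act_injective δ hinj w (by simp only [hp]))

variable [Fintype Q] [DecidableEq Q]

@[simp]
lemma mem_preim (S : Finset Q) (w : List A) (q : Q) : q ∈ preim δ S w ↔ act δ q w ∈ S := by
  simp [preim]

lemma exists_word_act_mem_of_extendable (L : ℕ)
    (hext : ∀ S : Finset Q, S.Nonempty → S ≠ Finset.univ →
      ∃ v : List A, v.length ≤ L ∧ S.card < (preim δ S v).card) (m : ℕ) :
    ∀ S : Finset Q, S.Nonempty → Fintype.card Q ≤ S.card + m →
      ∃ w : List A, w.length ≤ m * L ∧ ∀ q, act δ q w ∈ S := by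
  induction m with
  | zero =>
    intro S _ hcard
    have hS : S = Finset.univ :=
      Finset.eq_univ_of_card S (le_antisymm (Finset.card_le_univ S) hcard)
    exact ⟨[], by simp, by simp [hS]⟩
  | succ m ih =>
    intro S hS hcard
    by_cases hu : S = Finset.univ
    · exact ⟨[], by simp, by simp [hu]⟩
    obtain ⟨v, hv, hlt⟩ := hext S hS hu
    obtain ⟨w, hw, hws⟩ :=
      ih (preim δ S v) (Finset.card_pos.mp (Nat.zero_lt_of_lt hlt)) (by omega)
    refine ⟨w ++ v, ?_, fun q => ?_⟩
    · rw [List.length_append, Nat.succ_mul]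
      omega
    · rw [act_append]
      exact (mem_preim δ S v _).mp (hws q)

end Automaton

theorem stmt10_general {Q A : Type*} [Fintype Q] [DecidableEq Q] (δ : Q → A → Q)
    (n k : ℕ) (hn : Fintype.card Q = n)
    (hsync : ∃ (w : List A) (p : Q), ∀ q : Q, act δ q w = p)
    (hext : ∀ S : Finset Q, S.Nonempty → S ≠ Finset.univ →
      ∃ v : List A, v.length ≤ k * n ∧ S.card < (preim δ S v).card) :
    ∃ (w : List A) (p : Q), (∀ q : Q, act δ q w = p) ∧
      w.length ≤ (n - 2) * (k * n) + 1 := by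
  by_cases hn1 : n ≤ 1
  · obtain ⟨-, p, -⟩ := hsync
    have hsub := Fintype.card_le_one_iff.mp (hn ▸ hn1)
    exact ⟨[], p, fun q => hsub q p, by simp⟩
  obtain ⟨a, q₁, q₂, hq, hδ⟩ := exists_letter_merging_of_sync δ (by omega) hsync
  have hmerged : 2 ≤ (preim δ {δ q₁ a} [a]).card :=
    Finset.one_lt_card.mpr ⟨q₁, by simp, q₂, by simp [hδ], hq⟩
  obtain ⟨w, hw, hws⟩ := exists_word_act_mem_of_extendable δ (k * n) hext (n - 2)
    (preim δ {δ q₁ a} [a]) ⟨q₁, by simp⟩ (by omega)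
  refine ⟨w ++ [a], δ q₁ a, fun q => ?_, ?_⟩
  · simpa [act_append] using hws q
  · simp only [List.length_append, List.length_singleton]
    omega

theorem stmt10 {Q A : Type*} [Fintype Q] [DecidableEq Q] (δ : Q → A → Q)
    (n k : ℕ) (hn : Fintype.card Q = n)
    (hsync : ∃ (w : List A) (p : Q), ∀ q : Q, act δ q w = p)
    (hsc : ∀ p q : Q, ∃ u : List A, act δ p u = q)
    (hext : ∀ S : Finset Q, S.Nonempty → S ≠ Finset.univ →
      ∃ v : List A, v.length ≤ k * n ∧ S.card < (preim δ S v).card) :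
    ∃ (w : List A) (p : Q), (∀ q : Q, act δ q w = p) ∧
      w.length ≤ (n - 2) * (k * n) + 1 :=
  stmt10_general δ n k hn hsync hext
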